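/- Let X, Y ⊆ V be such that R ⊊ X_A and Y_A is neither a subset nor a superset of R. Then F(X) + F(Y) ≥ F(X ∪ Y) + F(X ∩ Y). -/

import Mathlib

open Finset

variable {α : Type*}

/-- The function `f_{A,R}`: 0 on `R`, 1 on strict subsets/supersets of `R`, 2 otherwise. -/
noncomputable def fAR [DecidableEq α] (R T : Finset α) : ℝ :=
  if T = R then 0 else if T ⊂ R ∨ R ⊂ T then 1 else 2

/-- The submodularizer `φ` on subsets of `V`, where `B = V \ A`:
`φ(S) = |S ∩ B|` if `S ∩ A ⊊ R`, `-|S ∩ B|` if `S ∩ A ⊋ R`, and `0` otherwise. -/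
noncomputable def phi [DecidableEq α] (A R B S : Finset α) : ℝ :=
  if S ∩ A ⊂ R then ((S ∩ B).card : ℝ)
  else if R ⊂ S ∩ A then -((S ∩ B).card : ℝ)
  else 0

/-- The main building block
`F(S) = f_{A,R}(S ∩ A) + (1/(2n)) φ(S) + (1/(4Mn)) ⋅ 1[S ∩ A = R] ⋅ g(S ∩ B)`. -/
noncomputable def Fbb [DecidableEq α] (n : ℕ) (A R B : Finset α) (M : ℝ)
    (g : Finset α → ℝ) (S : Finset α) : ℝ :=
  fAR R (S ∩ A) + (1 / (2 * (n : ℝ))) * phi A R B S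
    + (1 / (4 * M * (n : ℝ))) * (if S ∩ A = R then (1 : ℝ) else 0) * g (S ∩ B)

/-! None of the four sets meets `A` exactly in `R`, so the `g`-term vanishes throughout, and
`X ∪ Y` stays strictly above `R` with `|(X ∪ Y) ∩ B| ≥ |X ∩ B|`. If `X ∩ Y` is incomparable with `R`
the `f`-parts balance (`1 + 2 = 1 + 2`) and `φ` is monotone in the right direction; otherwise
`X ∩ Y ⊊ R`, the `f`-parts leave a slack of `1`, and the only positive `φ`-term is at most
`|V| / (2|V|) ≤ 1/2` (also for `V = ∅`, where `1 / (2 * 0)` is `0`). -/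

section Values

variable [DecidableEq α] {n : ℕ} {A R B : Finset α} {M : ℝ} {g : Finset α → ℝ} {S : Finset α}

theorem Fbb_of_ssubset (h : S ∩ A ⊂ R) :
    Fbb n A R B M g S = 1 + 1 / (2 * (n : ℝ)) * (S ∩ B).card := by
  simp [Fbb, fAR, phi, h, h.ne]

theorem Fbb_of_ssuperset (h : R ⊂ S ∩ A) :
    Fbb n A R B M g S = 1 - 1 / (2 * (n : ℝ)) * (S ∩ B).card := by
  simp [Fbb, fAR, phi, h, h.ne', ssubset_asymm h]
  ring

theorem Fbb_of_incomparable (h₁ : ¬ S ∩ A ⊆ R) (h₂ : ¬ R ⊆ S ∩ A) :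
    Fbb n A R B M g S = 2 := by
  have hsub : ¬ S ∩ A ⊂ R := fun h => h₁ h.subset
  have hsup : ¬ R ⊂ S ∩ A := fun h => h₂ h.subset
  have hne : S ∩ A ≠ R := fun h => h₁ h.le
  simp [Fbb, fAR, phi, hsub, hsup, hne]

end Values

theorem one_div_two_mul_mul_le_half {k n : ℕ} (h : k ≤ n) : 1 / (2 * (n : ℝ)) * k ≤ 1 / 2 := by
  rcases n.eq_zero_or_pos with rfl | hn
  · simp
  · rw [div_mul_eq_mul_div, one_mul, div_le_div_iff₀ (by positivity) two_pos]
    have : (k : ℝ) ≤ n := by exact_mod_cast h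
    linarith

theorem Fbb_case33_general [DecidableEq α] (V A R : Finset α)
    (M : ℝ) (g : Finset α → ℝ)
    (X Y : Finset α)
    (hXA : R ⊂ X ∩ A) (hYA : ¬ Y ∩ A ⊆ R ∧ ¬ R ⊆ Y ∩ A) :
    Fbb V.card A R (V \ A) M g (X ∪ Y) + Fbb V.card A R (V \ A) M g (X ∩ Y)
      ≤ Fbb V.card A R (V \ A) M g X + Fbb V.card A R (V \ A) M g Y := by
  obtain ⟨hY₁, hY₂⟩ := hYA
  have hU : R ⊂ (X ∪ Y) ∩ A := hXA.trans_subset (inter_subset_inter_right subset_union_left)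
  have hI₂ : ¬ R ⊆ X ∩ Y ∩ A := fun h =>
    hY₂ (h.trans (inter_subset_inter_right inter_subset_right))
  have hφXU : 1 / (2 * (V.card : ℝ)) * (X ∩ (V \ A)).card
      ≤ 1 / (2 * (V.card : ℝ)) * ((X ∪ Y) ∩ (V \ A)).card := by
    gcongr
    exact subset_union_left
  rw [Fbb_of_ssuperset hU, Fbb_of_ssuperset hXA, Fbb_of_incomparable hY₁ hY₂]
  by_cases hI₁ : X ∩ Y ∩ A ⊆ R
  · have hφI : 1 / (2 * (V.card : ℝ)) * (X ∩ Y ∩ (V \ A)).card ≤ 1 / 2 :=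
      one_div_two_mul_mul_le_half (card_le_card (inter_subset_right.trans sdiff_subset))
    rw [Fbb_of_ssubset (ssubset_of_subset_not_subset hI₁ hI₂)]
    linarith
  · rw [Fbb_of_incomparable hI₁ hI₂]
    linarith

/-- if R ⊊ X ∩ A and Y ∩ A is neither a subset nor a superset of R, then F(X) + F(Y) ≥ F(X ∪ Y) + F(X ∩ Y). -/
theorem Fbb_case33 [DecidableEq α] (V A R : Finset α) (hV : 1 ≤ V.card)
    (hA : A.Nonempty) (hR : R.Nonempty) (hRA : R ⊆ A) (hAV : A ⊆ V)
    (M : ℝ) (hM : 0 < M) (g : Finset α → ℝ)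

    (X Y : Finset α) (hX : X ⊆ V) (hY : Y ⊆ V)
    (hXA : R ⊂ X ∩ A) (hYA : ¬ Y ∩ A ⊆ R ∧ ¬ R ⊆ Y ∩ A) :
    Fbb V.card A R (V \ A) M g (X ∪ Y) + Fbb V.card A R (V \ A) M g (X ∩ Y)
      ≤ Fbb V.card A R (V \ A) M g X + Fbb V.card A R (V \ A) M g Y :=
  Fbb_case33_general V A R M g X Y hXA hYA
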